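/- If Γ is a non-trivial connected admissible graph, then there exists a path P of Γ (of some color) such that the graph Γ∖P obtained by removing all edges of P has at most one non-trivial connected component. -/

import Mathlib

noncomputable section

open Filter Topology

/-- A finite, directed, edge-colored graph with colors in `Fin s`,
with vertices living in an ambient type `V`. -/
structure CGraph (V : Type) (s : ℕ) where
  verts : Set V
  finite : verts.Finite
  nonem : verts.Nonempty
  E : Fin s → V → V → Prop
  memL : ∀ r a b, E r a b → a ∈ verts
  memR : ∀ r a b, E r a b → b ∈ verts

namespace CGraph

variable {V W : Type} {s : ℕ}

/-- A graph is trivial iff it has no edges (of any color). -/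
def Trivial (Γ : CGraph V s) : Prop := ∀ r a b, ¬ Γ.E r a b

/-- Two vertices are adjacent iff there is an edge (of any color, either direction)
between them. -/
def Adj (Γ : CGraph V s) (a b : V) : Prop := ∃ r, Γ.E r a b ∨ Γ.E r b a

/-- A graph is connected iff any two of its vertices are joined by a finite chain of
edges (of any colors and either direction). -/
def Connected (Γ : CGraph V s) : Prop :=
  ∀ a ∈ Γ.verts, ∀ b ∈ Γ.verts, Relation.ReflTransGen Γ.Adj a b

/-- `Γ'` is a subgraph of `Γ`. -/
def Subgraph (Γ' Γ : CGraph V s) : Prop :=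
  Γ'.verts ⊆ Γ.verts ∧ ∀ r a b, Γ'.E r a b → Γ.E r a b

/-- `C` is a connected component of `Γ`: a maximal connected subgraph. -/
def IsComponent (C Γ : CGraph V s) : Prop :=
  C.Subgraph Γ ∧ C.Connected ∧
    ∀ C' : CGraph V s, C'.Subgraph Γ → C'.Connected → C.Subgraph C' → C'.Subgraph C

/-- A graph is admissible iff no two distinct edges of the same color begin at the
same vertex or end at the same vertex. -/
def Admissible (Γ : CGraph V s) : Prop :=
  (∀ r a b b', Γ.E r a b → Γ.E r a b' → b = b') ∧
    (∀ r a a' b, Γ.E r a b → Γ.E r a' b → a = a')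

/-- `Γ.mono r` is `Γ` with all edges not of color `r` removed. -/
def mono (Γ : CGraph V s) (r : Fin s) : CGraph V s where
  verts := Γ.verts
  finite := Γ.finite
  nonem := Γ.nonem
  E := fun r' a b => r' = r ∧ Γ.E r' a b
  memL := fun r' a b h => Γ.memL r' a b h.2
  memR := fun r' a b h => Γ.memR r' a b h.2

/-- An `r`-path of `Γ` is a non-trivial connected component of `Γ.mono r`. -/
def IsRPath (P Γ : CGraph V s) (r : Fin s) : Prop :=
  P.IsComponent (Γ.mono r) ∧ ¬ P.Trivial

/-- A path of `Γ` is an `r`-path for some color `r`. -/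
def IsPathOf (P Γ : CGraph V s) : Prop := ∃ r, P.IsRPath Γ r

/-- A path is closed (a closed circuit) iff every one of its vertices has an
outgoing edge. -/
def Closed (P : CGraph V s) : Prop := ∀ a ∈ P.verts, ∃ r b, P.E r a b

/-- A loop of `Γ` is a path of `Γ` which is a closed circuit. -/
def IsLoopOf (P Γ : CGraph V s) : Prop := P.IsPathOf Γ ∧ P.Closed

/-- A string of `Γ` is a path of `Γ` which is not a loop. -/
def IsStringOf (P Γ : CGraph V s) : Prop := P.IsPathOf Γ ∧ ¬ P.Closed

/-- The number of edges of `Γ` (counting colors). -/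
def edgeCount (Γ : CGraph V s) : ℕ :=
  Nat.card {p : Fin s × V × V // Γ.E p.1 p.2.1 p.2.2}

/-- The number of loops (of any color) of `Γ`. -/
def loopCount (Γ : CGraph V s) : ℕ :=
  Nat.card {P : CGraph V s // P.IsLoopOf Γ}

/-- The number of vertices of `Γ`. -/
def vertCount (Γ : CGraph V s) : ℕ := Nat.card Γ.verts

/-- The loop-characteristic `χ(Γ) = V(Γ) - E(Γ) + L(Γ)`. -/
def chi (Γ : CGraph V s) : ℤ :=
  (Γ.vertCount : ℤ) - (Γ.edgeCount : ℤ) + (Γ.loopCount : ℤ)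

/-- `Γ.erase P` is the graph obtained from `Γ` by removing all edges of `P`. -/
def erase (Γ P : CGraph V s) : CGraph V s where
  verts := Γ.verts
  finite := Γ.finite
  nonem := Γ.nonem
  E := fun r a b => Γ.E r a b ∧ ¬ P.E r a b
  memL := fun r a b h => Γ.memL r a b h.1
  memR := fun r a b h => Γ.memR r a b h.1

/-- A graph is strongly admissible (w.r.t. `d : Fin s → ℕ∞`) iff it is admissible,
every `r`-loop has length `d r`, and every `r`-string has length `< d r`. -/
def StronglyAdmissible (d : Fin s → ℕ∞) (Γ : CGraph V s) : Prop :=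
  Γ.Admissible ∧ ∀ r P, IsRPath P Γ r →
    (P.Closed → (P.edgeCount : ℕ∞) = d r) ∧ (¬ P.Closed → (P.edgeCount : ℕ∞) < d r)

/-- The quotient of `Γ` by a partition (setoid) `π` of the ambient vertex type. -/
def quot (Γ : CGraph V s) (π : Setoid V) : CGraph (Quotient π) s where
  verts := Quotient.mk π '' Γ.verts
  finite := Γ.finite.image _
  nonem := Γ.nonem.image _
  E := fun r A B => ∃ a b, Γ.E r a b ∧ Quotient.mk π a = A ∧ Quotient.mk π b = B
  memL := fun r A B h => by
    obtain ⟨a, b, he, ha, hb⟩ := h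
    exact ⟨a, Γ.memL r a b he, ha⟩
  memR := fun r A B h => by
    obtain ⟨a, b, he, ha, hb⟩ := h
    exact ⟨b, Γ.memR r a b he, hb⟩

/-- `π` is a congruence of `Γ`: for any two edges of the same color, the source
blocks agree iff the target blocks agree. -/
def IsCongruence (Γ : CGraph V s) (π : Setoid V) : Prop :=
  ∀ r a₁ b₁ a₂ b₂, Γ.E r a₁ b₁ → Γ.E r a₂ b₂ → (π.r a₁ a₂ ↔ π.r b₁ b₂)

/-- `π` is a strong congruence of `Γ`: a congruence whose quotient is strongly
admissible. -/
def IsStrongCongruence (d : Fin s → ℕ∞) (Γ : CGraph V s) (π : Setoid V) : Prop :=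
  Γ.IsCongruence π ∧ (Γ.quot π).StronglyAdmissible d

/-- Isomorphism of edge-colored graphs: a bijection between the vertex sets
preserving the `r`-edges in both directions, for every color `r`. -/
def Iso (Γ₁ : CGraph V s) (Γ₂ : CGraph W s) : Prop :=
  ∃ Φ : V → W, Set.BijOn Φ Γ₁.verts Γ₂.verts ∧
    ∀ r a b, a ∈ Γ₁.verts → b ∈ Γ₁.verts → (Γ₂.E r (Φ a) (Φ b) ↔ Γ₁.E r a b)

end CGraph

/-!
Call two paths of `Γ` adjacent when they share a vertex. Since `Γ` is connected, so is this
finite graph of paths, and like every finite connected graph it has a vertex whose removal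
leaves it connected: a path `P` such that any two other paths are joined by a chain of paths
avoiding `P`. The edges of those paths all survive in `Γ ∖ P`, so any two edges of `Γ ∖ P`
lie in the same connected component.
-/

open Relation

namespace CGraph

variable {V : Type} {s : ℕ}

instance (Δ : CGraph V s) : Std.Symm Δ.Adj := ⟨fun _ _ ⟨r, h⟩ => ⟨r, h.symm⟩⟩

theorem Subgraph.trans {C D Δ : CGraph V s} (hCD : C.Subgraph D) (hDΔ : D.Subgraph Δ) :
    C.Subgraph Δ :=
  ⟨hCD.1.trans hDΔ.1, fun r a b h => hDΔ.2 r a b (hCD.2 r a b h)⟩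

theorem Subgraph.reflTransGen_adj {C Δ : CGraph V s} (hC : C.Subgraph Δ) {x y : V}
    (h : ReflTransGen C.Adj x y) : ReflTransGen Δ.Adj x y :=
  ReflTransGen.mono (fun _ _ ⟨r, he⟩ => ⟨r, he.imp (hC.2 r _ _) (hC.2 r _ _)⟩) _ _ h

theorem mem_verts_of_reflTransGen {Δ : CGraph V s} {a b : V} (ha : a ∈ Δ.verts)
    (hab : ReflTransGen Δ.Adj a b) : b ∈ Δ.verts := by
  induction hab with
  | refl => exact ha
  | tail _ hbc _ =>
    obtain ⟨r, h | h⟩ := hbc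
    · exact Δ.memR r _ _ h
    · exact Δ.memL r _ _ h

def componentOf (Δ : CGraph V s) (a : V) (ha : a ∈ Δ.verts) : CGraph V s where
  verts := {x | x ∈ Δ.verts ∧ ReflTransGen Δ.Adj a x}
  finite := Δ.finite.subset fun _ hx => hx.1
  nonem := ⟨a, ha, .refl⟩
  E := fun r x y => Δ.E r x y ∧ ReflTransGen Δ.Adj a x
  memL := fun r x y h => ⟨Δ.memL r x y h.1, h.2⟩
  memR := fun r x y h => ⟨Δ.memR r x y h.1, h.2.tail ⟨r, .inl h.1⟩⟩

section Components

variable {Δ : CGraph V s}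

theorem reflTransGen_componentOf_adj {a : V} (ha : a ∈ Δ.verts) {x : V}
    (hx : ReflTransGen Δ.Adj a x) : ReflTransGen (Δ.componentOf a ha).Adj a x := by
  induction hx with
  | refl => exact .refl
  | tail hay hyz ih =>
    obtain ⟨r, h | h⟩ := hyz
    · exact ih.tail ⟨r, .inl ⟨h, hay⟩⟩
    · exact ih.tail ⟨r, .inr ⟨h, hay.tail ⟨r, .inr h⟩⟩⟩

theorem subgraph_componentOf {C : CGraph V s} (hC : C.Subgraph Δ) (hconn : C.Connected)
    {a : V} (ha : a ∈ C.verts) : C.Subgraph (Δ.componentOf a (hC.1 ha)) :=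
  ⟨fun x hx => ⟨hC.1 hx, hC.reflTransGen_adj (hconn a ha x hx)⟩,
    fun r x y h => ⟨hC.2 r x y h, hC.reflTransGen_adj (hconn a ha x (C.memL r x y h))⟩⟩

theorem isComponent_componentOf {a : V} (ha : a ∈ Δ.verts) :
    (Δ.componentOf a ha).IsComponent Δ := by
  refine ⟨⟨fun _ hx => hx.1, fun _ _ _ h => h.1⟩, ?_, ?_⟩
  · rintro x ⟨-, hx⟩ y ⟨-, hy⟩
    exact (symm (reflTransGen_componentOf_adj ha hx)).trans (reflTransGen_componentOf_adj ha hy)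
  · intro C hC hconn hle
    exact subgraph_componentOf hC hconn (hle.1 ⟨ha, .refl⟩)

theorem IsComponent.componentOf_subgraph {C : CGraph V s} (hC : C.IsComponent Δ) {a : V}
    (ha : a ∈ C.verts) : (Δ.componentOf a (hC.1.1 ha)).Subgraph C :=
  let hcomp := isComponent_componentOf (hC.1.1 ha)
  hC.2.2 _ hcomp.1 hcomp.2.1 (subgraph_componentOf hC.1 hC.2.1 ha)

theorem IsComponent.mem_of_reflTransGen {C : CGraph V s} (hC : C.IsComponent Δ) {a b : V}
    (ha : a ∈ C.verts) (hab : ReflTransGen Δ.Adj a b) : b ∈ C.verts :=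
  (hC.componentOf_subgraph ha).1 ⟨mem_verts_of_reflTransGen (hC.1.1 ha) hab, hab⟩

theorem IsComponent.eq_of_mem {C C' : CGraph V s} (hC : C.IsComponent Δ)
    (hC' : C'.IsComponent Δ) {a : V} (ha : a ∈ C.verts) (ha' : a ∈ C'.verts) :
    C.verts = C'.verts ∧ ∀ r x y, C.E r x y ↔ C'.E r x y := by
  have hle : C.Subgraph C' :=
    (subgraph_componentOf hC.1 hC.2.1 ha).trans (hC'.componentOf_subgraph ha')
  have hge : C'.Subgraph C :=
    (subgraph_componentOf hC'.1 hC'.2.1 ha').trans (hC.componentOf_subgraph ha)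
  exact ⟨hle.1.antisymm hge.1, fun r x y => ⟨hle.2 r x y, hge.2 r x y⟩⟩

end Components

section Paths

variable {Γ : CGraph V s}

theorem not_trivial_iff : ¬ Γ.Trivial ↔ ∃ r a b, Γ.E r a b := by
  simp [Trivial]

theorem mono_adj_iff {r : Fin s} {x y : V} : (Γ.mono r).Adj x y ↔ Γ.E r x y ∨ Γ.E r y x :=
  ⟨fun ⟨_, h⟩ => h.imp (fun ⟨hr, he⟩ => hr ▸ he) (fun ⟨hr, he⟩ => hr ▸ he),
    fun h => ⟨r, h.imp (⟨rfl, ·⟩) (⟨rfl, ·⟩)⟩⟩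

variable (Γ) in
structure Edge where
  color : Fin s
  src : V
  tgt : V
  isEdge : Γ.E color src tgt

instance : Finite Γ.Edge :=
  have := Γ.finite.to_subtype
  Finite.of_injective (fun e : Γ.Edge => (e.color, (⟨e.src, Γ.memL _ _ _ e.isEdge⟩ : Γ.verts),
      (⟨e.tgt, Γ.memR _ _ _ e.isEdge⟩ : Γ.verts))) <| by
    rintro ⟨r, a, b, h⟩ ⟨r', a', b', h'⟩ heq
    simp only [Prod.mk.injEq, Subtype.mk.injEq] at heq
    obtain ⟨rfl, rfl, rfl⟩ := heq
    rfl

variable (Γ) in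
def OnPath (e : Γ.Edge) (v : V) : Prop := ReflTransGen (Γ.mono e.color).Adj e.src v

theorem onPath_src (e : Γ.Edge) : Γ.OnPath e e.src := .refl

theorem onPath_tgt (e : Γ.Edge) : Γ.OnPath e e.tgt := .single (mono_adj_iff.2 (.inl e.isEdge))

variable (Γ) in
def SamePath (e f : Γ.Edge) : Prop := e.color = f.color ∧ Γ.OnPath e f.src

theorem SamePath.symm {e f : Γ.Edge} (h : Γ.SamePath e f) : Γ.SamePath f e := by
  obtain ⟨hc, hp⟩ := h
  refine ⟨hc.symm, ?_⟩
  unfold OnPath at hp ⊢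
  rw [← hc]
  exact _root_.symm hp

theorem SamePath.trans {e f g : Γ.Edge} (hef : Γ.SamePath e f) (hfg : Γ.SamePath f g) :
    Γ.SamePath e g :=
  ⟨hef.1.trans hfg.1, hef.2.trans (hef.1 ▸ hfg.2)⟩

variable (Γ) in
def pathSetoid : Setoid Γ.Edge where
  r := Γ.SamePath
  iseqv := ⟨fun _ => ⟨rfl, .refl⟩, SamePath.symm, SamePath.trans⟩

variable (Γ) in
def pathOf (e : Γ.Edge) : CGraph V s :=
  (Γ.mono e.color).componentOf e.src (Γ.memL _ _ _ e.isEdge)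

theorem isPathOf_pathOf (e : Γ.Edge) : (Γ.pathOf e).IsPathOf Γ :=
  ⟨e.color, isComponent_componentOf _, fun h => h e.color e.src e.tgt ⟨⟨rfl, e.isEdge⟩, .refl⟩⟩

theorem erase_pathOf_E_iff (e₀ g : Γ.Edge) :
    (Γ.erase (Γ.pathOf e₀)).E g.color g.src g.tgt ↔ ¬ Γ.SamePath e₀ g :=
  ⟨fun h hs => h.2 ⟨⟨hs.1.symm, g.isEdge⟩, hs.2⟩,
    fun h => ⟨g.isEdge, fun hp => h ⟨hp.1.1.symm, hp.2⟩⟩⟩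

theorem reflTransGen_erase_pathOf_of_onPath {e₀ e : Γ.Edge} (he : ¬ Γ.SamePath e₀ e) {v : V}
    (hv : Γ.OnPath e v) : ReflTransGen (Γ.erase (Γ.pathOf e₀)).Adj e.src v := by
  have survives (g : Γ.Edge) (hc : g.color = e.color) (hg : Γ.OnPath e g.src) :
      (Γ.erase (Γ.pathOf e₀)).E g.color g.src g.tgt :=
    (erase_pathOf_E_iff e₀ g).2 fun h => he (h.trans (SamePath.symm ⟨hc.symm, hg⟩))
  induction hv with
  | refl => exact .refl
  | tail hx hxw ih =>
    rcases mono_adj_iff.1 hxw with h | h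
    · exact ih.tail ⟨_, .inl (survives ⟨_, _, _, h⟩ rfl hx)⟩
    · exact ih.tail ⟨_, .inr (survives ⟨_, _, _, h⟩ rfl (hx.tail hxw))⟩

variable (Γ) in
/-- The paths of `Γ`, represented by the classes of their edges, adjacent when they meet. -/
def pathGraph : SimpleGraph (Quotient Γ.pathSetoid) :=
  SimpleGraph.fromRel fun c d =>
    ∃ e f v, ⟦e⟧ = c ∧ ⟦f⟧ = d ∧ Γ.OnPath e v ∧ Γ.OnPath f v

theorem pathGraph_reachable_of_onPath {e f : Γ.Edge} {v : V} (he : Γ.OnPath e v)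
    (hf : Γ.OnPath f v) : Γ.pathGraph.Reachable ⟦e⟧ ⟦f⟧ := by
  by_cases h : (⟦e⟧ : Quotient Γ.pathSetoid) = ⟦f⟧
  · rw [h]
  · exact SimpleGraph.Adj.reachable
      ((SimpleGraph.fromRel_adj _ _ _).2 ⟨h, .inl ⟨e, f, v, rfl, rfl, he, hf⟩⟩)

theorem pathGraph_connected (hconn : Γ.Connected) (e₁ : Γ.Edge) : Γ.pathGraph.Connected := by
  refine (SimpleGraph.connected_iff _).2 ⟨?_, ⟨⟦e₁⟧⟩⟩
  rintro ⟨e⟩ ⟨f⟩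
  suffices ∀ y, ReflTransGen Γ.Adj e.src y → ∀ f, Γ.OnPath f y →
      Γ.pathGraph.Reachable ⟦e⟧ ⟦f⟧ from
    this f.src (hconn _ (Γ.memL _ _ _ e.isEdge) _ (Γ.memL _ _ _ f.isEdge)) f (onPath_src f)
  intro y hy
  induction hy with
  | refl => exact fun f hf => pathGraph_reachable_of_onPath (onPath_src e) hf
  | tail _ hxy ih =>
    obtain ⟨r, h | h⟩ := hxy
    · exact fun f hf => (ih ⟨r, _, _, h⟩ (onPath_src _)).trans
        (pathGraph_reachable_of_onPath (onPath_tgt _) hf)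
    · exact fun f hf => (ih ⟨r, _, _, h⟩ (onPath_tgt _)).trans
        (pathGraph_reachable_of_onPath (onPath_src _) hf)

theorem reflTransGen_erase_pathOf {e₀ : Γ.Edge}
    (hpre : (Γ.pathGraph.induce {⟦e₀⟧}ᶜ).Preconnected) {e f : Γ.Edge}
    (he : ¬ Γ.SamePath e₀ e) (hf : ¬ Γ.SamePath e₀ f) :
    ReflTransGen (Γ.erase (Γ.pathOf e₀)).Adj e.src f.src := by
  have off_path (g : Γ.Edge) : ⟦g⟧ ∈ ({⟦e₀⟧}ᶜ : Set _) ↔ ¬ Γ.SamePath e₀ g :=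
    not_congr ⟨fun h => Quotient.exact h.symm, fun h => (Quotient.sound (s := Γ.pathSetoid) h).symm⟩
  suffices ∀ t, ReflTransGen (Γ.pathGraph.induce {⟦e₀⟧}ᶜ).Adj ⟨⟦e⟧, (off_path e).2 he⟩ t →
      ∀ f, ⟦f⟧ = t.1 → ReflTransGen (Γ.erase (Γ.pathOf e₀)).Adj e.src f.src from
    this ⟨⟦f⟧, (off_path f).2 hf⟩ ((SimpleGraph.reachable_iff_reflTransGen _ _).1 (hpre _ _)) f rfl
  intro t ht
  induction ht with
  | refl => exact fun f hf => reflTransGen_erase_pathOf_of_onPath he (Quotient.exact hf.symm).2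
  | @tail c d _ hcd ih =>
    intro f hf
    have meet (g h : Γ.Edge) (v : V) (hg : ⟦g⟧ = c.1) (hh : ⟦h⟧ = d.1) (hgv : Γ.OnPath g v)
        (hhv : Γ.OnPath h v) : ReflTransGen (Γ.erase (Γ.pathOf e₀)).Adj e.src f.src := by
      have hg' := (off_path g).1 (hg ▸ c.2)
      have hh' := (off_path h).1 (hh ▸ d.2)
      exact ((ih g hg).trans (reflTransGen_erase_pathOf_of_onPath hg' hgv)).trans
        ((_root_.symm (reflTransGen_erase_pathOf_of_onPath hh' hhv)).trans
          (reflTransGen_erase_pathOf_of_onPath hh' (Quotient.exact (hh.trans hf.symm)).2))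
    obtain ⟨-, ⟨g, h, v, hg, hh, hgv, hhv⟩ | ⟨h, g, v, hh, hg, hhv, hgv⟩⟩ :=
      (SimpleGraph.fromRel_adj _ _ _).1 (SimpleGraph.induce_adj.1 hcd)
    · exact meet g h v hg hh hgv hhv
    · exact meet g h v hg hh hgv hhv

theorem exists_edge_not_samePath {e₀ : Γ.Edge} {C : CGraph V s}
    (hC : C.Subgraph (Γ.erase (Γ.pathOf e₀))) (hCnt : ¬ C.Trivial) :
    ∃ e : Γ.Edge, e.src ∈ C.verts ∧ ¬ Γ.SamePath e₀ e := by
  obtain ⟨r, a, b, h⟩ := not_trivial_iff.1 hCnt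
  have hΓ := hC.2 r a b h
  exact ⟨⟨r, a, b, hΓ.1⟩, C.memL r a b h, (erase_pathOf_E_iff e₀ _).1 hΓ⟩

end Paths

end CGraph

theorem exists_path_removal_at_most_one_nontrivial_component_general {V : Type} {s : ℕ}
    (Γ : CGraph V s) (hnt : ¬ Γ.Trivial) (hconn : Γ.Connected) :
    ∃ P : CGraph V s, P.IsPathOf Γ ∧
      ∀ C C' : CGraph V s, C.IsComponent (Γ.erase P) → C'.IsComponent (Γ.erase P) →
        ¬ C.Trivial → ¬ C'.Trivial →
          C.verts = C'.verts ∧ ∀ r a b, C.E r a b ↔ C'.E r a b := by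
  obtain ⟨r, a, b, hab⟩ := CGraph.not_trivial_iff.1 hnt
  obtain ⟨x, hx⟩ := (Γ.pathGraph_connected hconn ⟨r, a, b, hab⟩
    ).exists_preconnected_induce_compl_singleton_of_finite
  obtain ⟨e₀, rfl⟩ := Quotient.exists_rep x
  refine ⟨Γ.pathOf e₀, CGraph.isPathOf_pathOf e₀, fun C C' hC hC' hCnt hC'nt => ?_⟩
  obtain ⟨e, heC, he⟩ := CGraph.exists_edge_not_samePath hC.1 hCnt
  obtain ⟨e', he'C', he'⟩ := CGraph.exists_edge_not_samePath hC'.1 hC'nt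
  exact hC.eq_of_mem hC' heC
    (hC'.mem_of_reflTransGen he'C' (CGraph.reflTransGen_erase_pathOf hx he' he))

/-- If `Γ` is a non-trivial connected admissible graph, then there is a path `P`
of `Γ` such that `Γ ∖ P` has at most one non-trivial connected component. -/
theorem exists_path_removal_at_most_one_nontrivial_component {V : Type} {s : ℕ}
    (hs : 0 < s) (Γ : CGraph V s) (hnt : ¬ Γ.Trivial) (hconn : Γ.Connected)
    (hadm : Γ.Admissible) :
    ∃ P : CGraph V s, P.IsPathOf Γ ∧
      ∀ C C' : CGraph V s, C.IsComponent (Γ.erase P) → C'.IsComponent (Γ.erase P) →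
        ¬ C.Trivial → ¬ C'.Trivial →
          C.verts = C'.verts ∧ ∀ r a b, C.E r a b ↔ C'.E r a b :=
  exists_path_removal_at_most_one_nontrivial_component_general Γ hnt hconn
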